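/- arXiv:2105.02333 — 3 statements merged into one kernel-verified Lean document; each statement's English description precedes it below -/
import Mathlib

section
/- Let G act by isometries on a geodesic metric space X, weakly acylindrically along a subspace Y ⊆ X: for every ε ≥ 0 there is R₀(ε) ≥ 0 such that for all x,y ∈ Y with d(x,y) ≥ R₀(ε), the set {g ∈ G : d(gx,x) ≤ ε and d(gy,y) ≤ ε} is finite. Fix x₀ ∈ X and let π: G → X be the orbit map g ↦ gx₀; give G the word metric of any fixed generating set (or any proper left-invariant metric making balls finite). Then for each r ≥ 0 there is R₁ ≥ 0 such that: if x, y ∈ Y with d(x,y) ≥ R₁, then the sets A = π⁻¹(B_r(x)) and B = π⁻¹(B_r(y)) are geometrically separated in G, i.e. for every D > 0 the diameter of N_D(A) ∩ B (in the metric on G) is finite. -/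
open Metric Set

/-- A geodesic metric space. -/
def IsGeodesicSpace (X : Type*) [MetricSpace X] : Prop :=
  ∀ x y : X, ∃ γ : ℝ → X, γ 0 = x ∧ γ (dist x y) = y ∧
    ∀ s ∈ Set.Icc (0:ℝ) (dist x y), ∀ t ∈ Set.Icc (0:ℝ) (dist x y),
      dist (γ s) (γ t) = |s - t|

/-- Sisto, Lemma 3.3: if `G` (with a proper left-invariant metric) acts
isometrically on a geodesic space `X`, weakly acylindrically along `Y`, then for each `r ≥ 0`
there is `R₁` so that preimages under the orbit map of `r`-balls about points of `Y` at
distance at least `R₁` are geometrically separated in `G`. -/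
theorem preimages_geometrically_separated
    {G X : Type*} [Group G] [MetricSpace G] [MetricSpace X] [MulAction G X]
    (hisoX : ∀ (g : G) (x y : X), dist (g • x) (g • y) = dist x y)
    (hleft : ∀ a g h : G, dist (a * g) (a * h) = dist g h)
    (hballs : ∀ (g : G) (r : ℝ), ({h : G | dist g h ≤ r}).Finite)
    (hgeo : IsGeodesicSpace X)
    (Y : Set X) (x₀ : X)
    (hweak : ∀ ε : ℝ, 0 ≤ ε → ∃ R₀ : ℝ, 0 ≤ R₀ ∧ ∀ x ∈ Y, ∀ y ∈ Y, R₀ ≤ dist x y →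
      ({g : G | dist (g • x) x ≤ ε ∧ dist (g • y) y ≤ ε}).Finite) :
    ∀ r : ℝ, 0 ≤ r → ∃ R₁ : ℝ, 0 ≤ R₁ ∧ ∀ x ∈ Y, ∀ y ∈ Y, R₁ ≤ dist x y →
      ∀ D : ℝ, 0 < D →
        Bornology.IsBounded
          {g : G | (∃ a : G, dist (a • x₀) x ≤ r ∧ dist g a ≤ D) ∧ dist (g • x₀) y ≤ r} := by
  intro r hr
  obtain ⟨R₀, hR₀, hfin⟩ := hweak (2 * r) (by linarith)
  refine ⟨R₀, hR₀, ?_⟩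
  intro x hx y hy hxy D hD
  have hF : ({c : G | dist (1 : G) c ≤ D}).Finite := hballs 1 D
  have hK : ({k : G | dist (k • x) x ≤ 2 * r ∧ dist (k • y) y ≤ 2 * r}).Finite :=
    hfin x hx y hy hxy
  -- for each fixed `c`, the corresponding slice is finite
  have hSc : ∀ c : G,
      ({g : G | dist ((g * c) • x₀) x ≤ r ∧ dist (g • x₀) y ≤ r}).Finite := by
    intro c
    rcases Set.eq_empty_or_nonempty
        {g : G | dist ((g * c) • x₀) x ≤ r ∧ dist (g • x₀) y ≤ r} with hemp | ⟨h, hh⟩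
    · rw [hemp]; exact Set.finite_empty
    · have hsub : {g : G | dist ((g * c) • x₀) x ≤ r ∧ dist (g • x₀) y ≤ r} ⊆
          (fun k => k * h) '' {k : G | dist (k • x) x ≤ 2 * r ∧ dist (k • y) y ≤ 2 * r} := by
        intro g hg
        refine ⟨g * h⁻¹, ⟨?_, ?_⟩, by group⟩
        · have key : (g * h⁻¹) • ((h * c) • x₀) = (g * c) • x₀ := by
            rw [← mul_smul]; congr 1; group
          calc dist ((g * h⁻¹) • x) x
              ≤ dist ((g * h⁻¹) • x) ((g * h⁻¹) • ((h * c) • x₀))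
                  + dist ((g * h⁻¹) • ((h * c) • x₀)) x := dist_triangle _ _ _
            _ = dist x ((h * c) • x₀) + dist ((g * c) • x₀) x := by rw [hisoX, key]
            _ ≤ r + r := add_le_add (by rw [dist_comm]; exact hh.1) hg.1
            _ = 2 * r := by ring
        · have key : (g * h⁻¹) • (h • x₀) = g • x₀ := by
            rw [← mul_smul]; congr 1; group
          calc dist ((g * h⁻¹) • y) y
              ≤ dist ((g * h⁻¹) • y) ((g * h⁻¹) • (h • x₀))
                  + dist ((g * h⁻¹) • (h • x₀)) y := dist_triangle _ _ _
            _ = dist y (h • x₀) + dist (g • x₀) y := by rw [hisoX, key]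
            _ ≤ r + r := add_le_add (by rw [dist_comm]; exact hh.2) hg.2
            _ = 2 * r := by ring
      exact ((hK.image _).subset hsub)
  -- the whole set is contained in the union of the slices over the finite ball
  have hsub : {g : G | (∃ a : G, dist (a • x₀) x ≤ r ∧ dist g a ≤ D) ∧ dist (g • x₀) y ≤ r} ⊆
      ⋃ c ∈ {c : G | dist (1 : G) c ≤ D},
        {g : G | dist ((g * c) • x₀) x ≤ r ∧ dist (g • x₀) y ≤ r} := by
    rintro g ⟨⟨a, ha, hga⟩, hgy⟩
    refine Set.mem_iUnion₂.mpr ⟨g⁻¹ * a, ?_, ?_⟩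
    · show dist (1 : G) (g⁻¹ * a) ≤ D
      have := hleft g 1 (g⁻¹ * a)
      simp only [mul_one, ← mul_assoc, mul_inv_cancel, one_mul] at this
      rw [← this]; exact hga
    · constructor
      · have : g * (g⁻¹ * a) = a := by group
        rw [this]; exact ha
      · exact hgy
  exact ((hF.biUnion fun c _ => hSc c).subset hsub).isBounded
end

section
/- Let G act by isometries on a δ-hyperbolic geodesic space X, let H ≤ G be finitely generated with the orbit map h ↦ hx₀ a quasi-isometric embedding whose image Hx₀ is λ-quasi-convex. Suppose the action is acylindrical along Hx₀ in the sense: for every ε ≥ 0 there are R(ε), M(ε) > 0 so that for x, y ∈ Hx₀ with d(x,y) ≥ R(ε), #{g ∈ G : d(gx,x) ≤ ε, d(gy,y) ≤ ε} ≤ M(ε). Then for every ε ≥ 0 there exist D, N > 0 such that any collection of distinct cosets g₁H, …, g_nH with diam(⋂_{i=1}^n N_ε(g_i H x₀)) > D satisfies n ≤ N. -/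
open Metric Set

/-- The Gromov product `(x∣y)_w`. -/
noncomputable def gprod {X : Type*} [MetricSpace X] (w x y : X) : ℝ :=
  (dist w x + dist w y - dist x y) / 2

/-- Word length with respect to a (symmetrized) generating set `S`. -/
noncomputable def wlen {G : Type*} [Group G] (S : Set G) (g : G) : ℕ :=
  sInf {n | ∃ l : List G, l.length = n ∧ (∀ x ∈ l, x ∈ S ∨ x⁻¹ ∈ S) ∧ l.prod = g}

/-!
After translating by an element of `G`, the ε-neighbourhoods of all the cosets `gHx₀` contain
points near `x₀` and near a far point `y₁ ∈ Hx₀`. Thinness of triangles and quasi-convexity of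
`gHx₀` force every such coset to pass near one fixed point `y ∈ Hx₀` on the geodesic `[x₀, y₁]`
at distance about `R` from `x₀`. Pick `c_g, d_g ∈ gH` with `c_g x₀` near `x₀` and `d_g x₀` near
`y`. Then `g ↦ c_g⁻¹ d_g` takes values in a finite ball of `H` (the orbit map is a
quasi-isometric embedding), and on each fibre `g ↦ c_g c_{g₀}⁻¹` is injective (distinct cosets)
into the set of elements moving both `x₀` and `y` a bounded amount, which acylindricity bounds
by `M`.
-/

open scoped Pointwise

section

variable {X : Type*} [MetricSpace X]

def IsGeodesicPath (γ : ℝ → X) (a b : X) : Prop :=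
  γ 0 = a ∧ γ (dist a b) = b ∧
    ∀ s ∈ Icc (0 : ℝ) (dist a b), ∀ t ∈ Icc (0 : ℝ) (dist a b), dist (γ s) (γ t) = |s - t|

namespace IsGeodesicPath

variable {γ : ℝ → X} {a b : X} {s : ℝ}

lemma dist_left (hγ : IsGeodesicPath γ a b) (hs : s ∈ Icc 0 (dist a b)) : dist a (γ s) = s := by
  have h := hγ.2.2 0 ⟨le_rfl, dist_nonneg⟩ s hs
  rwa [hγ.1, zero_sub, abs_neg, abs_of_nonneg hs.1] at h

lemma dist_right (hγ : IsGeodesicPath γ a b) (hs : s ∈ Icc 0 (dist a b)) :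
    dist (γ s) b = dist a b - s := by
  have h := hγ.2.2 s hs (dist a b) ⟨dist_nonneg, le_rfl⟩
  rwa [hγ.2.1, abs_sub_comm, abs_of_nonneg (sub_nonneg.2 hs.2)] at h

lemma reverse (hγ : IsGeodesicPath γ a b) : IsGeodesicPath (fun s => γ (dist a b - s)) b a := by
  refine ⟨by simpa using hγ.2.1, by simpa [dist_comm] using hγ.1, fun s hs t ht => ?_⟩
  rw [dist_comm b a] at hs ht
  rw [hγ.2.2 _ ⟨by linarith [hs.2], by linarith [hs.1]⟩ _ ⟨by linarith [ht.2], by linarith [ht.1]⟩,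
    ← abs_neg]
  ring_nf

lemma smul {M : Type*} [SMul M X] [IsIsometricSMul M X] (hγ : IsGeodesicPath γ a b) (c : M) :
    IsGeodesicPath (fun s => c • γ s) (c • a) (c • b) := by
  simp only [IsGeodesicPath, dist_smul]
  exact ⟨congrArg _ hγ.1, congrArg _ hγ.2.1, hγ.2.2⟩

end IsGeodesicPath

lemma gprod_comm (w x y : X) : gprod w x y = gprod w y x := by
  unfold gprod
  rw [dist_comm x y]
  ring

lemma gprod_le_dist_left (w x y : X) : gprod w x y ≤ dist w x := by
  unfold gprod
  linarith [dist_triangle w x y]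

lemma gprod_le_dist_right (w x y : X) : gprod w x y ≤ dist w y :=
  gprod_comm w x y ▸ gprod_le_dist_left w y x

def GromovHyperbolic (δ : ℝ) (X : Type*) [MetricSpace X] : Prop :=
  ∀ w x y z : X, min (gprod w x y) (gprod w y z) - δ ≤ gprod w x z

namespace GromovHyperbolic

variable {δ : ℝ} {γ σ : ℝ → X}

lemma dist_le_of_le_gprod (hX : GromovHyperbolic δ X) (hδ : 0 ≤ δ) {a b c : X}
    (hγ : IsGeodesicPath γ a b) (hσ : IsGeodesicPath σ a c) {s : ℝ} (hs₀ : 0 ≤ s)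
    (hs : s ≤ gprod a b c) : dist (γ s) (σ s) ≤ 4 * δ := by
  have hsb : s ∈ Icc 0 (dist a b) := ⟨hs₀, hs.trans (gprod_le_dist_left a b c)⟩
  have hsc : s ∈ Icc 0 (dist a c) := ⟨hs₀, hs.trans (gprod_le_dist_right a b c)⟩
  have hγs : gprod a (γ s) b = s := by
    unfold gprod
    rw [hγ.dist_right hsb, hγ.dist_left hsb]
    ring
  have hσs : gprod a c (σ s) = s := by
    unfold gprod
    rw [dist_comm c, hσ.dist_right hsc, hσ.dist_left hsc]
    ring
  have hγσ : gprod a (γ s) (σ s) = s - dist (γ s) (σ s) / 2 := by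
    unfold gprod
    rw [hγ.dist_left hsb, hσ.dist_left hsc]
    ring
  have hbσ := hX a b c (σ s)
  rw [hσs, min_eq_right hs] at hbσ
  have hγσ' := hX a (γ s) b (σ s)
  rw [hγs, hγσ] at hγσ'
  linarith [le_min (by linarith : s - δ ≤ s) hbσ]

lemma exists_dist_le_of_dist_le (hX : GromovHyperbolic δ X) (hδ : 0 ≤ δ)
    (hgeo : IsGeodesicSpace X) {x y p q : X} (hγ : IsGeodesicPath γ x y)
    (hσ : IsGeodesicPath σ q p) {a t : ℝ} (hp : dist x p ≤ a) (hq : dist y q ≤ a) (hat : a ≤ t)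
    (ht : t ≤ dist x y - a) : ∃ s ∈ Icc 0 (dist q p), dist (γ t) (σ s) ≤ 8 * δ := by
  -- Compare `γ` with a geodesic `τ` from `x` to `q`, then `τ` run backwards with `σ`.
  obtain ⟨τ, hτ⟩ : ∃ τ, IsGeodesicPath τ x q := hgeo x q
  have hxq : t ≤ dist x q := by linarith [dist_triangle x q y, dist_comm y q]
  have hγτ : dist (γ t) (τ t) ≤ 4 * δ :=
    hX.dist_le_of_le_gprod hδ hγ hτ (by linarith [dist_nonneg (x := x) (y := p)])
      (by unfold gprod; linarith [dist_triangle x q y, dist_comm y q])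
  have hτσ : dist (τ t) (σ (dist x q - t)) ≤ 4 * δ := by
    simpa using hX.dist_le_of_le_gprod hδ hτ.reverse hσ (s := dist x q - t) (by linarith)
      (by unfold gprod; linarith [dist_triangle q p x, dist_comm q x, dist_comm p x])
  refine ⟨dist x q - t, ⟨by linarith, ?_⟩, ?_⟩
  · linarith [dist_triangle q p x, dist_comm q x, dist_comm p x]
  · linarith [dist_triangle (γ t) (τ t) (σ (dist x q - t))]

end GromovHyperbolic

def IsQuasiConvex (lam : ℝ) (Y : Set X) : Prop :=
  ∀ a ∈ Y, ∀ b ∈ Y, ∀ γ : ℝ → X, IsGeodesicPath γ a b →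
    ∀ s ∈ Icc (0 : ℝ) (dist a b), infDist (γ s) Y ≤ lam

namespace IsQuasiConvex

variable {lam : ℝ} {Y : Set X} {γ : ℝ → X}

lemma exists_dist_lt (hY : IsQuasiConvex lam Y) {a b : X} (ha : a ∈ Y) (hb : b ∈ Y)
    (hγ : IsGeodesicPath γ a b) {s : ℝ} (hs : s ∈ Icc 0 (dist a b)) :
    ∃ y ∈ Y, dist (γ s) y < lam + 1 :=
  (infDist_lt_iff ⟨a, ha⟩).1 ((hY a ha b hb γ hγ s hs).trans_lt (lt_add_one lam))

lemma smul {G : Type*} [Group G] [MulAction G X] [IsIsometricSMul G X]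
    (hY : IsQuasiConvex lam Y) (g : G) : IsQuasiConvex lam (g • Y) := by
  intro a ha b hb γ hγ s hs
  rw [mem_smul_set_iff_inv_smul_mem] at ha hb
  have h := hY _ ha _ hb _ (hγ.smul g⁻¹) s (by rwa [dist_smul])
  rwa [← infDist_image (isometry_smul X g), image_smul, smul_inv_smul] at h

lemma exists_dist_lt_of_dist_le (hY : IsQuasiConvex lam Y) {δ : ℝ} (hX : GromovHyperbolic δ X)
    (hδ : 0 ≤ δ) (hgeo : IsGeodesicSpace X) {x y p q : X} (hγ : IsGeodesicPath γ x y)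
    (hp : p ∈ Y) (hq : q ∈ Y) {a t : ℝ} (hxp : dist x p ≤ a) (hyq : dist y q ≤ a) (hat : a ≤ t)
    (ht : t ≤ dist x y - a) : ∃ z ∈ Y, dist (γ t) z < 8 * δ + lam + 1 := by
  obtain ⟨σ, hσ⟩ : ∃ σ, IsGeodesicPath σ q p := hgeo q p
  obtain ⟨s, hs, hγσ⟩ := hX.exists_dist_le_of_dist_le hδ hgeo hγ hσ hxp hyq hat ht
  obtain ⟨z, hz, hσz⟩ := hY.exists_dist_lt hq hp hσ hs
  exact ⟨z, hz, by linarith [dist_triangle (γ t) (σ s) z]⟩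

end IsQuasiConvex

section WordLength

variable {G : Type*} [Group G] {S : Set G}

lemma exists_list_length_eq_wlen {g : G} (hg : g ∈ Subgroup.closure S) :
    ∃ l : List G, l.length = wlen S g ∧ (∀ x ∈ l, x ∈ S ∨ x⁻¹ ∈ S) ∧ l.prod = g := by
  rw [← Subgroup.mem_toSubmonoid, Subgroup.closure_toSubmonoid] at hg
  obtain ⟨l, hlS, hl⟩ := Submonoid.exists_list_of_mem_closure hg
  exact Nat.sInf_mem
    (s := {n | ∃ l : List G, l.length = n ∧ (∀ x ∈ l, x ∈ S ∨ x⁻¹ ∈ S) ∧ l.prod = g})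
    ⟨l.length, l, rfl, hlS, hl⟩

lemma finite_setOf_mem_closure_wlen_le (hS : S.Finite) (n : ℕ) :
    {g | g ∈ Subgroup.closure S ∧ wlen S g ≤ n}.Finite := by
  have : Finite ↥(S ∪ S⁻¹) := (hS.union hS.inv).to_subtype
  refine ((List.finite_length_le ↥(S ∪ S⁻¹) n).image fun l => (l.map (↑)).prod).subset ?_
  rintro g ⟨hg, hn⟩
  obtain ⟨l, hlen, hlS, rfl⟩ := exists_list_length_eq_wlen hg
  lift l to List ↥(S ∪ S⁻¹) using hlS
  exact ⟨l, by simpa using hlen.trans_le hn, rfl⟩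

lemma finite_setOf_mem_closure_dist_smul_le [MulAction G X] (hS : S.Finite) {C : ℝ} (hC : 0 < C)
    {x₀ : X} (hqi : ∀ h ∈ Subgroup.closure S, (wlen S h : ℝ) / C - C ≤ dist (h • x₀) x₀)
    (ρ : ℝ) : {h | h ∈ Subgroup.closure S ∧ dist (h • x₀) x₀ ≤ ρ}.Finite := by
  refine (finite_setOf_mem_closure_wlen_le hS ⌊C * (ρ + C)⌋₊).subset ?_
  rintro h ⟨hh, hρ⟩
  refine ⟨hh, Nat.le_floor ?_⟩
  have := (div_le_iff₀ hC).1 (by linarith [hqi h hh] : (wlen S h : ℝ) / C ≤ ρ + C)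
  linarith

end WordLength

section Cosets

variable {G : Type*} [Group G] [MulAction G X] [IsIsometricSMul G X]

lemma dist_smul_self_le_of_mul_eq {k a b : G} (h : k * a = b) (x y : X) :
    dist (k • y) y ≤ dist (a • x) y + dist (b • x) y :=
  calc dist (k • y) y ≤ dist (k • y) (b • x) + dist (b • x) y := dist_triangle _ _ _
    _ = dist (a • x) y + dist (b • x) y := by rw [← h, mul_smul, dist_smul, dist_comm]

lemma dist_inv_mul_smul_le (A g : G) (u v z : X) :
    dist ((A⁻¹ * g) • u) v ≤ dist z (g • u) + dist z (A • v) := by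
  rw [mul_smul, ← dist_smul A, smul_inv_smul]
  exact dist_triangle_left _ _ _

variable {H : Subgroup G} {x₀ : X}

lemma forall_mem_image_mul_left_inv_mul_notMem [DecidableEq G] (A : G) {T : Finset G}
    (hT : ∀ g ∈ T, ∀ g' ∈ T, g ≠ g' → g⁻¹ * g' ∉ H) :
    ∀ g ∈ T.image (A * ·), ∀ g' ∈ T.image (A * ·), g ≠ g' → g⁻¹ * g' ∉ H := by
  simp only [Finset.forall_mem_image]
  intro g hg g' hg' hne
  simpa [mul_assoc] using hT g hg g' hg' (by rintro rfl; exact hne rfl)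

lemma exists_dist_le_of_mem_image_inv_mul [DecidableEq G] {A : G} {T : Finset G} {z v : X} {ε : ℝ}
    (hz : ∀ g ∈ T, ∃ h ∈ H, dist z ((g * h) • x₀) ≤ ε) (hA : dist z (A • v) ≤ ε) :
    ∀ g ∈ T.image (A⁻¹ * ·), ∃ h ∈ H, dist ((g * h) • x₀) v ≤ 2 * ε := by
  simp only [Finset.forall_mem_image]
  intro g hg
  obtain ⟨h, hh, hzh⟩ := hz g hg
  refine ⟨h, hh, ?_⟩
  rw [mul_assoc]
  linarith [dist_inv_mul_smul_le A (g * h) x₀ v z]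

theorem card_le_mul_card_of_cosets_near {x y : X} {r : ℝ} {M : ℕ} {B T : Finset G}
    (hT : ∀ g ∈ T, ∀ g' ∈ T, g ≠ g' → g⁻¹ * g' ∉ H)
    (hx : ∀ g ∈ T, ∃ h ∈ H, dist ((g * h) • x₀) x ≤ r)
    (hy : ∀ g ∈ T, ∃ h ∈ H, dist ((g * h) • x₀) y ≤ r)
    (hE : {k : G | dist (k • x) x ≤ 2 * r ∧ dist (k • y) y ≤ 2 * r}.Finite)
    (hM : {k : G | dist (k • x) x ≤ 2 * r ∧ dist (k • y) y ≤ 2 * r}.ncard ≤ M)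
    (hB : ∀ h ∈ H, dist (h • x₀) x₀ ≤ 2 * r + dist x y → h ∈ B) :
    T.card ≤ M * B.card := by
  classical
  choose! c hcH hc using hx
  choose! d hdH hd using hy
  set F : G → G := fun g => (c g)⁻¹ * d g
  have hFB : ∀ g ∈ T, F g ∈ B := by
    intro g hg
    refine hB _ (mul_mem (inv_mem (hcH g hg)) (hdH g hg)) ?_
    have : F g = (g * c g)⁻¹ * (g * d g) := by simp only [F]; group
    rw [this, mul_smul, ← dist_smul (g * c g), smul_inv_smul]
    linarith [dist_triangle4 ((g * d g) • x₀) y x ((g * c g) • x₀), hc g hg, hd g hg,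
      dist_comm x ((g * c g) • x₀), dist_comm x y]
  refine Finset.card_le_mul_card_image_of_maps_to hFB M fun b _ => ?_
  rcases Finset.eq_empty_or_nonempty {g ∈ T | F g = b} with hb | ⟨g₀, hg₀⟩
  · simp [hb]
  rw [Finset.mem_filter] at hg₀
  refine le_trans ?_ (ncard_eq_toFinset_card _ hE ▸ hM)
  refine Finset.card_le_card_of_injOn (fun g => (g * c g) * (g₀ * c g₀)⁻¹) ?_ ?_
  · intro g hg
    rw [Finset.coe_filter] at hg
    have hF : (c g)⁻¹ * d g = (c g₀)⁻¹ * d g₀ := hg.2.trans hg₀.2.symm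
    have hdg : (g * c g) * (g₀ * c g₀)⁻¹ * (g₀ * d g₀) = g * d g :=
      calc _ = g * c g * ((c g₀)⁻¹ * d g₀) := by group
        _ = g * d g := by rw [← hF]; group
    rw [Finset.mem_coe, Finite.mem_toFinset]
    constructor
    · linarith [dist_smul_self_le_of_mul_eq (inv_mul_cancel_right (g * c g) (g₀ * c g₀)) x₀ x,
        hc g hg.1, hc g₀ hg₀.1]
    · linarith [dist_smul_self_le_of_mul_eq hdg x₀ y, hd g hg.1, hd g₀ hg₀.1]
  · intro g hg g' hg' hgg'
    rw [Finset.coe_filter] at hg hg'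
    by_contra hne
    refine hT g hg.1 g' hg'.1 hne ?_
    have : g⁻¹ * g' = c g * (c g')⁻¹ := by
      rw [inv_mul_eq_iff_eq_mul, ← mul_assoc, eq_mul_inv_iff_mul_eq]
      exact (mul_right_cancel hgg').symm
    rw [this]
    exact mul_mem (hcH g hg.1) (inv_mem (hcH g' hg'.1))

theorem card_le_of_cosets_near_two_points {δ lam : ℝ} (hX : GromovHyperbolic δ X) (hδ : 0 ≤ δ)
    (hgeo : IsGeodesicSpace X) (hY : IsQuasiConvex lam ((· • x₀) '' (H : Set G)))
    {a t r R : ℝ} {M : ℕ} {B T : Finset G} {y₁ : X}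
    (ha : 0 ≤ a) (hat : a ≤ t) (hRt : R + lam + 1 ≤ t) (har : a ≤ r)
    (hr : 8 * δ + 2 * lam + 2 ≤ r)
    (hM : ∀ y ∈ (· • x₀) '' (H : Set G), R ≤ dist x₀ y →
      {k : G | dist (k • x₀) x₀ ≤ 2 * r ∧ dist (k • y) y ≤ 2 * r}.Finite ∧
      {k : G | dist (k • x₀) x₀ ≤ 2 * r ∧ dist (k • y) y ≤ 2 * r}.ncard ≤ M)
    (hB : ∀ h ∈ H, dist (h • x₀) x₀ ≤ 2 * r + (t + lam + 1) → h ∈ B)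
    (hT : ∀ g ∈ T, ∀ g' ∈ T, g ≠ g' → g⁻¹ * g' ∉ H)
    (hy₁ : y₁ ∈ (· • x₀) '' (H : Set G)) (hfar : t + a ≤ dist x₀ y₁)
    (hx₀T : ∀ g ∈ T, ∃ h ∈ H, dist ((g * h) • x₀) x₀ ≤ a)
    (hy₁T : ∀ g ∈ T, ∃ h ∈ H, dist ((g * h) • x₀) y₁ ≤ a) :
    T.card ≤ M * B.card := by
  obtain ⟨γ, hγ⟩ : ∃ γ, IsGeodesicPath γ x₀ y₁ := hgeo x₀ y₁
  have ht : t ∈ Icc 0 (dist x₀ y₁) := ⟨ha.trans hat, by linarith⟩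
  obtain ⟨y, hyY, hy⟩ := hY.exists_dist_lt ⟨1, H.one_mem, one_smul G x₀⟩ hy₁ hγ ht
  have hγt := hγ.dist_left ht
  have hyT : ∀ g ∈ T, ∃ h ∈ H, dist ((g * h) • x₀) y ≤ r := by
    intro g hg
    obtain ⟨h, hh, hxh⟩ := hx₀T g hg
    obtain ⟨h', hh', hyh'⟩ := hy₁T g hg
    obtain ⟨_, ⟨_, ⟨k, hk, rfl⟩, rfl⟩, hk'⟩ :=
      (hY.smul g).exists_dist_lt_of_dist_le hX hδ hgeo hγ
        (smul_mem_smul_set ⟨h, hh, rfl⟩) (smul_mem_smul_set ⟨h', hh', rfl⟩)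
        (by rwa [dist_comm, smul_smul]) (by rwa [dist_comm, smul_smul]) hat (by linarith)
    refine ⟨k, hk, ?_⟩
    rw [← smul_smul]
    linarith [dist_triangle (g • k • x₀) (γ t) y, dist_comm (g • k • x₀) (γ t)]
  obtain ⟨hE, hEM⟩ := hM y hyY (by linarith [dist_triangle x₀ y (γ t), dist_comm y (γ t)])
  refine card_le_mul_card_of_cosets_near hT ?_ hyT hE hEM fun h hh hd => hB h hh ?_
  · intro g hg
    obtain ⟨h, hh, hxh⟩ := hx₀T g hg
    exact ⟨h, hh, hxh.trans har⟩
  · linarith [dist_triangle x₀ (γ t) y]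

end Cosets

end

theorem acyl_defB_implies_defA_general
    {G X : Type*} [Group G] [MetricSpace X] [MulAction G X]
    (hiso : ∀ (g : G) (x y : X), dist (g • x) (g • y) = dist x y)
    (δ : ℝ) (hδ : 0 ≤ δ)
    (hhyp : ∀ w x y z : X, min (gprod w x y) (gprod w y z) - δ ≤ gprod w x z)
    (hgeo : IsGeodesicSpace X)
    (x₀ : X) (H : Subgroup G)
    -- H is finitely generated and quasi-isometrically embedded by the orbit map
    (S : Set G) (hSfin : S.Finite) (hSgen : Subgroup.closure S = H)
    (C : ℝ) (hC : 1 ≤ C)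
    (hqie : ∀ h ∈ H, (wlen S h : ℝ) / C - C ≤ dist (h • x₀) x₀ ∧
      dist (h • x₀) x₀ ≤ C * (wlen S h) + C)
    -- λ-quasi-convexity of the orbit Hx₀
    (lam : ℝ)
    (hqc : ∀ a ∈ (fun h : G => h • x₀) '' (H : Set G),
      ∀ b ∈ (fun h : G => h • x₀) '' (H : Set G),
      ∀ γ : ℝ → X, γ 0 = a → γ (dist a b) = b →
        (∀ s ∈ Set.Icc (0:ℝ) (dist a b), ∀ t ∈ Set.Icc (0:ℝ) (dist a b),
          dist (γ s) (γ t) = |s - t|) →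
        ∀ u ∈ Set.Icc (0:ℝ) (dist a b),
          infDist (γ u) ((fun h : G => h • x₀) '' (H : Set G)) ≤ lam)
    -- Definition B, with constants R(ε), M(ε)
    (R : ℝ → ℝ) (M : ℝ → ℕ)
    (hB : ∀ ε : ℝ, 0 ≤ ε →
      ∀ x ∈ (fun h : G => h • x₀) '' (H : Set G),
      ∀ y ∈ (fun h : G => h • x₀) '' (H : Set G),
        R ε ≤ dist x y →
          ({g : G | dist (g • x) x ≤ ε ∧ dist (g • y) y ≤ ε}).Finite ∧
          ({g : G | dist (g • x) x ≤ ε ∧ dist (g • y) y ≤ ε}).ncard ≤ M ε) :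
    ∀ ε : ℝ, 0 ≤ ε → ∃ D : ℝ, ∃ N : ℕ,
      ∀ T : Finset G,
        (∀ g ∈ T, ∀ g' ∈ T, g ≠ g' → g⁻¹ * g' ∉ H) →
        (∃ z w : X, (∀ g ∈ T, (∃ h ∈ H, dist z ((g * h) • x₀) ≤ ε) ∧
            (∃ h ∈ H, dist w ((g * h) • x₀) ≤ ε)) ∧ D < dist z w) →
        T.card ≤ N := by
  classical
  have : IsIsometricSMul G X := ⟨fun g => Isometry.of_dist_eq (hiso g)⟩
  have hY : IsQuasiConvex lam ((· • x₀) '' (H : Set G)) :=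
    fun a ha b hb γ hγ => hqc a ha b hb γ hγ.1 hγ.2.1 hγ.2.2
  intro ε hε
  set r := max (2 * ε) (8 * δ + 2 * lam + 2)
  set t := max (R (2 * r) + lam + 1) (2 * ε)
  obtain ⟨Ball, hBall⟩ := (finite_setOf_mem_closure_dist_smul_le hSfin (one_pos.trans_le hC)
    (fun h hh => (hqie h (hSgen ▸ hh)).1) (2 * r + (t + lam + 1))).exists_finset
  refine ⟨t + 4 * ε, M (2 * r) * Ball.card, fun T hT ⟨z, w, hzw, hD⟩ => ?_⟩
  obtain rfl | ⟨g₁, hg₁⟩ := T.eq_empty_or_nonempty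
  · simp
  obtain ⟨⟨h₁, hh₁, hz⟩, h₁', hh₁', hw⟩ := hzw g₁ hg₁
  have hAy₁ : (g₁ * h₁) • (h₁⁻¹ * h₁') • x₀ = (g₁ * h₁') • x₀ := by rw [smul_smul]; group
  set A := g₁ * h₁
  have hr : 0 ≤ 2 * r := by linarith [le_max_left (2 * ε) (8 * δ + 2 * lam + 2)]
  rw [← Finset.card_image_of_injective T (mul_right_injective A⁻¹)]
  refine card_le_of_cosets_near_two_points hhyp hδ hgeo hY (y₁ := (h₁⁻¹ * h₁') • x₀)
    (by positivity) (le_max_right _ _) (le_max_left _ _) (le_max_left _ _) (le_max_right _ _)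
    (hB (2 * r) hr x₀ ⟨1, H.one_mem, one_smul G x₀⟩)
    (fun h hh hd => (hBall h).2 ⟨hSgen ▸ hh, hd⟩) (forall_mem_image_mul_left_inv_mul_notMem _ hT)
    ⟨h₁⁻¹ * h₁', mul_mem (inv_mem hh₁) hh₁', rfl⟩ ?_
    (exists_dist_le_of_mem_image_inv_mul (fun g hg => (hzw g hg).1) (inv_smul_smul A x₀ ▸ hz))
    (exists_dist_le_of_mem_image_inv_mul (fun g hg => (hzw g hg).2) (hAy₁ ▸ hw))
  rw [← dist_smul A, hAy₁]
  linarith [dist_triangle4 z (A • x₀) ((g₁ * h₁') • x₀) w, dist_comm ((g₁ * h₁') • x₀) w]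

/-- Theorem 3.5, forward direction: pointwise acylindricity along the
λ-quasi-convex orbit `Hx₀` (Definition B) implies the coset-intersection form
(Definition A). -/
theorem acyl_defB_implies_defA
    {G X : Type*} [Group G] [MetricSpace X] [MulAction G X]
    (hiso : ∀ (g : G) (x y : X), dist (g • x) (g • y) = dist x y)
    (δ : ℝ) (hδ : 0 ≤ δ)
    (hhyp : ∀ w x y z : X, min (gprod w x y) (gprod w y z) - δ ≤ gprod w x z)
    (hgeo : IsGeodesicSpace X)
    (x₀ : X) (H : Subgroup G)
    -- H is finitely generated and quasi-isometrically embedded by the orbit map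
    (S : Set G) (hSfin : S.Finite) (hSgen : Subgroup.closure S = H)
    (C : ℝ) (hC : 1 ≤ C)
    (hqie : ∀ h ∈ H, (wlen S h : ℝ) / C - C ≤ dist (h • x₀) x₀ ∧
      dist (h • x₀) x₀ ≤ C * (wlen S h) + C)
    -- λ-quasi-convexity of the orbit Hx₀
    (lam : ℝ) (hlam : 0 ≤ lam)
    (hqc : ∀ a ∈ (fun h : G => h • x₀) '' (H : Set G),
      ∀ b ∈ (fun h : G => h • x₀) '' (H : Set G),
      ∀ γ : ℝ → X, γ 0 = a → γ (dist a b) = b →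
        (∀ s ∈ Set.Icc (0:ℝ) (dist a b), ∀ t ∈ Set.Icc (0:ℝ) (dist a b),
          dist (γ s) (γ t) = |s - t|) →
        ∀ u ∈ Set.Icc (0:ℝ) (dist a b),
          infDist (γ u) ((fun h : G => h • x₀) '' (H : Set G)) ≤ lam)
    -- Definition B, with constants R(ε), M(ε)
    (R : ℝ → ℝ) (M : ℝ → ℕ)
    (hB : ∀ ε : ℝ, 0 ≤ ε →
      ∀ x ∈ (fun h : G => h • x₀) '' (H : Set G),
      ∀ y ∈ (fun h : G => h • x₀) '' (H : Set G),
        R ε ≤ dist x y →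
          ({g : G | dist (g • x) x ≤ ε ∧ dist (g • y) y ≤ ε}).Finite ∧
          ({g : G | dist (g • x) x ≤ ε ∧ dist (g • y) y ≤ ε}).ncard ≤ M ε) :
    ∀ ε : ℝ, 0 ≤ ε → ∃ D : ℝ, ∃ N : ℕ,
      ∀ T : Finset G,
        (∀ g ∈ T, ∀ g' ∈ T, g ≠ g' → g⁻¹ * g' ∉ H) →
        (∃ z w : X, (∀ g ∈ T, (∃ h ∈ H, dist z ((g * h) • x₀) ≤ ε) ∧
            (∃ h ∈ H, dist w ((g * h) • x₀) ≤ ε)) ∧ D < dist z w) →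
        T.card ≤ N :=
  acyl_defB_implies_defA_general hiso δ hδ hhyp hgeo x₀ H S hSfin hSgen C hC hqie lam hqc R M hB
end

section
/- Let G act by isometries on a hyperbolic geodesic space X, and let H₁, …, H_n be infinite subgroups of G, each finitely generated and quasi-isometrically embedded by the action. Then the action of G on X is acylindrical along the finite collection {H₁, …, H_n} (in the sense of Definition of acylindricity along a collection) if and only if for each i the triple (G, X, H_i) is an A/QI triple (i.e., the action is acylindrical along each H_i individually). -/
open Metric Set

section

variable {G X : Type*} [Group G] [MetricSpace X] [MulAction G X]

/-- `z` lies in the `ε`-neighborhood of the translate `g·(Hx₀)` of the orbit of `H`. -/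
def InNbhdOfCoset (x₀ : X) (H : Subgroup G) (g : G) (ε : ℝ) (z : X) : Prop :=
  ∃ h ∈ H, dist z ((g * h) • x₀) ≤ ε

/-- Acylindricity of the action along (the orbit of) a single subgroup `H`,
in the coset-intersection form. -/
def AcylAlongSubgroup (x₀ : X) (H : Subgroup G) : Prop :=
  ∀ ε : ℝ, 0 ≤ ε → ∃ D : ℝ, ∃ N : ℕ,
    ∀ T : Finset G,
      (∀ g ∈ T, ∀ g' ∈ T, g ≠ g' → g⁻¹ * g' ∉ H) →
      (∃ z w : X, (∀ g ∈ T, InNbhdOfCoset x₀ H g ε z ∧ InNbhdOfCoset x₀ H g ε w) ∧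
        D < dist z w) →
      T.card ≤ N

/-- Acylindricity of the action along a collection of subgroups. -/
def AcylAlongCollection (x₀ : X) {n : ℕ} (H : Fin n → Subgroup G) : Prop :=
  ∀ ε : ℝ, 0 ≤ ε → ∃ D : ℝ, ∃ N : ℕ,
    ∀ T : Finset (Fin n × G),
      (∀ p ∈ T, ∀ q ∈ T, p.1 = q.1 → p ≠ q → p.2⁻¹ * q.2 ∉ H p.1) →
      (∃ z w : X, (∀ p ∈ T, InNbhdOfCoset x₀ (H p.1) p.2 ε z ∧
          InNbhdOfCoset x₀ (H p.1) p.2 ε w) ∧ D < dist z w) →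
      T.card ≤ N

/-- `H` is finitely generated and quasi-isometrically embedded by the orbit map. -/
def QIEmbeddedByAction (x₀ : X) (H : Subgroup G) : Prop :=
  ∃ S : Set G, S.Finite ∧ Subgroup.closure S = H ∧
    ∃ C : ℝ, 1 ≤ C ∧ ∀ h ∈ H,
      (wlen S h : ℝ) / C - C ≤ dist (h • x₀) x₀ ∧ dist (h • x₀) x₀ ≤ C * (wlen S h) + C

end

/-- Proposition 3.8: for a finite collection of infinite quasi-isometrically
embedded subgroups of a group acting on a hyperbolic space, the action is acylindrical along
the collection iff each `(G,X,Hᵢ)` is an A/QI triple. -/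
theorem acyl_along_finite_collection_iff
    {G X : Type*} [Group G] [MetricSpace X] [MulAction G X]
    (hiso : ∀ (g : G) (x y : X), dist (g • x) (g • y) = dist x y)
    (δ : ℝ) (hδ : 0 ≤ δ)
    (hhyp : ∀ w x y z : X, min (gprod w x y) (gprod w y z) - δ ≤ gprod w x z)
    (x₀ : X) (n : ℕ) (H : Fin n → Subgroup G)
    (hinf : ∀ i, ((H i : Set G)).Infinite)
    (hqie : ∀ i, QIEmbeddedByAction x₀ (H i)) :
    AcylAlongCollection x₀ H ↔ ∀ i, AcylAlongSubgroup x₀ (H i) := by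
  classical
  constructor
  · intro hc i ε hε
    obtain ⟨D, N, hDN⟩ := hc ε hε
    refine ⟨D, N, ?_⟩
    rintro T hT ⟨z, w, hzw, hd⟩
    have hinj : Function.Injective (fun g : G => (i, g)) :=
      fun a b h => congrArg Prod.snd h
    have := hDN (T.image (fun g => (i, g))) ?_ ⟨z, w, ?_, hd⟩
    · rwa [Finset.card_image_of_injective _ hinj] at this
    · intro p hp q hq _ hne
      simp only [Finset.mem_image] at hp hq
      obtain ⟨g, hg, rfl⟩ := hp
      obtain ⟨g', hg', rfl⟩ := hq
      exact hT g hg g' hg' (fun h => hne (by rw [h]))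
    · intro p hp
      simp only [Finset.mem_image] at hp
      obtain ⟨g, hg, rfl⟩ := hp
      exact hzw g hg
  · intro h ε hε
    choose D N hDN using fun i => h i ε hε
    refine ⟨⨆ i, D i, ∑ i, N i, ?_⟩
    rintro T hT ⟨z, w, hzw, hd⟩
    have hcard : T.card = ∑ i, (T.filter (fun p => p.1 = i)).card :=
      Finset.card_eq_sum_card_fiberwise (fun p _ => Finset.mem_univ p.1)
    rw [hcard]
    refine Finset.sum_le_sum fun i _ => ?_
    have himg : (T.filter (fun p => p.1 = i)).card
        = ((T.filter (fun p => p.1 = i)).image Prod.snd).card := by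
      rw [Finset.card_image_of_injOn]
      intro p hp q hq hpq
      simp only [Finset.mem_coe, Finset.mem_filter] at hp hq
      exact Prod.ext (hp.2.trans hq.2.symm) hpq
    rw [himg]
    refine hDN i ((T.filter (fun p => p.1 = i)).image Prod.snd) ?_ ⟨z, w, ?_, ?_⟩
    · intro g hg g' hg' hne
      simp only [Finset.mem_image, Finset.mem_filter] at hg hg'
      obtain ⟨p, ⟨hp, hpi⟩, rfl⟩ := hg
      obtain ⟨q, ⟨hq, hqi⟩, rfl⟩ := hg'
      have hpq : p ≠ q := fun h => hne (by rw [h])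
      have := hT p hp q hq (hpi.trans hqi.symm) hpq
      rwa [hpi] at this
    · intro g hg
      simp only [Finset.mem_image, Finset.mem_filter] at hg
      obtain ⟨p, ⟨hp, hpi⟩, rfl⟩ := hg
      have := hzw p hp
      rwa [hpi] at this
    · exact lt_of_le_of_lt (le_ciSup (Set.finite_range D).bddAbove i) hd
end
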